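/- Let p = N(μ₁, v₁) and q = N(μ₂, v₂) be real Gaussian measures with v₁, v₂ > 0, write σ₁ = √v₁ and σ₂ = √v₂, and let L : ℝ → ℝ be a β-Lipschitz function that is integrable with respect to both p and q. Then |∫ L dp − ∫ L dq| ≤ β · √((μ₁ − μ₂)² + (σ₁ − σ₂)²). -/

import Mathlib

open MeasureTheory ProbabilityTheory
open scoped NNReal ENNReal

/-!
Couple `p` and `q` through a standard Gaussian `Z`: `σ₁ Z + μ₁ ∼ p` and `σ₂ Z + μ₂ ∼ q`.
The Lipschitz bound then gives `|∫ L dp − ∫ L dq| ≤ β 𝔼|(σ₁ − σ₂) Z + (μ₁ − μ₂)|`, and the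
first absolute moment of `N(m, s²)` is at most its root second moment `√(m² + s²)`.
-/

section

variable {Ω : Type*} [MeasurableSpace Ω] {ν : Measure Ω}

lemma abs_integral_map_sub_le_of_lipschitz {f g : Ω → ℝ} (hf : AEMeasurable f ν)
    (hg : AEMeasurable g ν) {β : ℝ} {L : ℝ → ℝ} (hL : ∀ x y, |L x - L y| ≤ β * |x - y|)
    (hLf : Integrable L (ν.map f)) (hLg : Integrable L (ν.map g))
    (hfg : Integrable (fun ω ↦ f ω - g ω) ν) :
    |∫ x, L x ∂ν.map f - ∫ x, L x ∂ν.map g| ≤ β * ∫ ω, |f ω - g ω| ∂ν := by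
  have hLf' : Integrable (fun ω ↦ L (f ω)) ν := (integrable_map_measure hLf.1 hf).mp hLf
  have hLg' : Integrable (fun ω ↦ L (g ω)) ν := (integrable_map_measure hLg.1 hg).mp hLg
  rw [integral_map hf hLf.1, integral_map hg hLg.1, ← integral_sub hLf' hLg',
    ← integral_const_mul]
  refine abs_integral_le_integral_abs.trans <| integral_mono (hLf'.sub hLg').abs
    (hfg.abs.const_mul β) fun ω ↦ hL (f ω) (g ω)

lemma sq_integral_abs_le_integral_sq [IsProbabilityMeasure ν] {X : Ω → ℝ} (hX : MemLp X 2 ν) :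
    (∫ ω, |X ω| ∂ν) ^ 2 ≤ ∫ ω, X ω ^ 2 ∂ν := by
  have h := variance_eq_sub hX.abs
  simp only [Pi.pow_apply, Pi.abs_apply, sq_abs] at h
  linarith [variance_nonneg |X| ν]

end

lemma integral_sq_gaussianReal (μ : ℝ) (v : ℝ≥0) :
    ∫ x, x ^ 2 ∂gaussianReal μ v = μ ^ 2 + v := by
  have h := variance_eq_sub (memLp_id_gaussianReal (μ := μ) (v := v) 2)
  simp only [variance_id_gaussianReal, Pi.pow_apply, id_eq, integral_id_gaussianReal] at h
  linarith

lemma integral_abs_gaussianReal_le (μ : ℝ) (v : ℝ≥0) :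
    ∫ x, |x| ∂gaussianReal μ v ≤ Real.sqrt (μ ^ 2 + v) := by
  have h := sq_integral_abs_le_integral_sq (memLp_id_gaussianReal (μ := μ) (v := v) 2)
  simp only [id_eq, integral_sq_gaussianReal] at h
  exact (le_abs_self _).trans (Real.abs_le_sqrt h)

lemma gaussianReal_map_const_mul_add (μ : ℝ) (v : ℝ≥0) (c y : ℝ) :
    (gaussianReal μ v).map (fun x ↦ c * x + y) =
      gaussianReal (c * μ + y) (.mk (c ^ 2) (sq_nonneg c) * v) := by
  rw [show (fun x ↦ c * x + y) = (· + y) ∘ (c * ·) from rfl,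
    ← Measure.map_map (measurable_add_const y) (measurable_const_mul c),
    gaussianReal_map_const_mul, gaussianReal_map_add_const]

lemma gaussianReal_zero_one_map_const_mul_add (c y : ℝ) :
    (gaussianReal 0 1).map (fun x ↦ c * x + y) = gaussianReal y (.mk (c ^ 2) (sq_nonneg c)) := by
  rw [gaussianReal_map_const_mul_add, mul_zero, zero_add, mul_one]

lemma gaussianReal_eq_map_sqrt_mul_add (μ : ℝ) (v : ℝ≥0) :
    gaussianReal μ v = (gaussianReal 0 1).map (fun x ↦ Real.sqrt v * x + μ) := by
  rw [gaussianReal_zero_one_map_const_mul_add]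
  congr
  exact NNReal.eq (Real.sq_sqrt v.2).symm

theorem lipschitz_integral_diff_le_gaussian_wasserstein_general
    (μ₁ μ₂ : ℝ) (v₁ v₂ : ℝ≥0)
    (σ₁ σ₂ : ℝ) (hσ₁ : σ₁ = Real.sqrt v₁) (hσ₂ : σ₂ = Real.sqrt v₂)
    (β : ℝ) (L : ℝ → ℝ)
    (hL : ∀ x y, |L x - L y| ≤ β * |x - y|)
    (hLp : Integrable L (gaussianReal μ₁ v₁))
    (hLq : Integrable L (gaussianReal μ₂ v₂)) :
    |(∫ x, L x ∂gaussianReal μ₁ v₁) - ∫ x, L x ∂gaussianReal μ₂ v₂| ≤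
      β * Real.sqrt ((μ₁ - μ₂) ^ 2 + (σ₁ - σ₂) ^ 2) := by
  have hβ : 0 ≤ β := by simpa using (abs_nonneg _).trans (hL 1 0)
  set γ := gaussianReal 0 1
  have hmeas (c y : ℝ) : Measurable fun x : ℝ ↦ c * x + y := by fun_prop
  have hdiff (x : ℝ) : (σ₁ * x + μ₁) - (σ₂ * x + μ₂) = (σ₁ - σ₂) * x + (μ₁ - μ₂) := by ring
  have hp : gaussianReal μ₁ v₁ = γ.map (fun x ↦ σ₁ * x + μ₁) := by
    rw [hσ₁, gaussianReal_eq_map_sqrt_mul_add]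
  have hq : gaussianReal μ₂ v₂ = γ.map (fun x ↦ σ₂ * x + μ₂) := by
    rw [hσ₂, gaussianReal_eq_map_sqrt_mul_add]
  rw [hp] at hLp ⊢
  rw [hq] at hLq ⊢
  calc _ ≤ β * ∫ x, |(σ₁ * x + μ₁) - (σ₂ * x + μ₂)| ∂γ :=
        abs_integral_map_sub_le_of_lipschitz (hmeas _ _).aemeasurable (hmeas _ _).aemeasurable
          hL hLp hLq (((IsGaussian.integrable_id.const_mul _).add
            (integrable_const _)).congr (ae_of_all _ fun x ↦ (hdiff x).symm))
    _ = β * ∫ x, |(σ₁ - σ₂) * x + (μ₁ - μ₂)| ∂γ := by simp only [hdiff]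
    _ = β * ∫ x, |x| ∂gaussianReal (μ₁ - μ₂) (.mk ((σ₁ - σ₂) ^ 2) (sq_nonneg _)) := by
        rw [← gaussianReal_zero_one_map_const_mul_add,
          integral_map (hmeas _ _).aemeasurable continuous_abs.aestronglyMeasurable]
    _ ≤ β * Real.sqrt ((μ₁ - μ₂) ^ 2 + (σ₁ - σ₂) ^ 2) :=
        mul_le_mul_of_nonneg_left (integral_abs_gaussianReal_le _ _) hβ

/-- For Gaussians `p = N(μ₁, v₁)` and `q = N(μ₂, v₂)` with `σᵢ = √vᵢ`, and a `β`-Lipschitz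
function `L` integrable with respect to both, one has
`|∫ L dp − ∫ L dq| ≤ β · √((μ₁ − μ₂)² + (σ₁ − σ₂)²)`. -/
theorem lipschitz_integral_diff_le_gaussian_wasserstein
    (μ₁ μ₂ : ℝ) (v₁ v₂ : ℝ≥0) (hv₁ : 0 < v₁) (hv₂ : 0 < v₂)
    (σ₁ σ₂ : ℝ) (hσ₁ : σ₁ = Real.sqrt v₁) (hσ₂ : σ₂ = Real.sqrt v₂)
    (β : ℝ) (L : ℝ → ℝ)
    (hL : ∀ x y, |L x - L y| ≤ β * |x - y|)
    (hLp : Integrable L (gaussianReal μ₁ v₁))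
    (hLq : Integrable L (gaussianReal μ₂ v₂)) :
    |(∫ x, L x ∂gaussianReal μ₁ v₁) - ∫ x, L x ∂gaussianReal μ₂ v₂| ≤
      β * Real.sqrt ((μ₁ - μ₂) ^ 2 + (σ₁ - σ₂) ^ 2) :=
  lipschitz_integral_diff_le_gaussian_wasserstein_general μ₁ μ₂ v₁ v₂ σ₁ σ₂ hσ₁ hσ₂ β L hL hLp hLq
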